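/- arXiv:2309.00659 — 2 statements merged into one kernel-verified Lean document; each statement's English description precedes it below -/
import Mathlib

section
/- For every positive odd integer n and every integer m with 1 ≤ m ≤ (n+1)/2, the following congruence holds modulo the n-th cyclotomic polynomial Phi_n(q) in Z[q] (after clearing denominators): sum_{k=0}^{n-m} (q^{4m-2};q^4)_k / (q^2;q^2)_k * q^{3k - k^2 - 4km} ≡ (-1)^{(n-1)/2 + m - 1} * q^{-(n^2-1)/2 + 2m^2 - 2m} (mod Phi_n(q)). -/
open Finset Polynomial

/-- The q-Pochhammer symbol `(a; q)_n` in the field of rational functions. -/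
noncomputable def qPoch (a q : RatFunc ℚ) (n : ℕ) : RatFunc ℚ :=
  ∏ j ∈ Finset.range n, (1 - a * q ^ j)

/-- `A ≡ B (mod Φ_n(q)^e)` in the localization of `ℚ[q]` at the n-th cyclotomic
polynomial: the difference can be written as `Φ_n(q)^e · u / v` with `Φ_n ∤ v`. -/
def CongrModCyclo (n e : ℕ) (A B : RatFunc ℚ) : Prop :=
  ∃ u v : Polynomial ℚ, ¬ (Polynomial.cyclotomic n ℚ ∣ v) ∧
    (A - B) * algebraMap (Polynomial ℚ) (RatFunc ℚ) v
      = algebraMap (Polynomial ℚ) (RatFunc ℚ) ((Polynomial.cyclotomic n ℚ) ^ e * u)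

noncomputable def q : RatFunc ℚ := RatFunc.X

/-!
At a primitive `n`-th root of unity `ζ`, put `x = ζ²` and `M = (n+1)/2 - m`, so that `q^(4m-2)`
becomes `x^(-2M)`. The numerator `(q^(4m-2); q^4)_k` then vanishes for `k > M`, and after
absorbing the power of `q` the `k`-th summand becomes
`(-1)^k x^(k(k-1)/2) ∏_{j<k} (1 - x^(2(M-j))) / (x; x)_k`. Multiplied by `(x; x)_M` the sum is
`∑_k (-1)^k x^(k(k-1)/2) [M, k]_{x²} (-x; x)_k (x; x)_M`, and this equals `(-1)^M x^(M²) (x; x)_M`: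
by induction on `M`, simultaneously with the companion sum of weights `x^(k(k-1)/2 - k)`, using two
`q`-Pascal recurrences. Both sides of the congruence are thus regular at `ζ` with the same value,
so `Φ_n` divides the numerator of their difference.
-/

section AlternatingSum

variable {K : Type*} [Field K] (x : K)

-- `pochSelf x M = (x; x)_M` and `binomProd x M k = (x; x)_M [M, k]_{x²} (-x; x)_k`.
def pochSelf (M : ℕ) : K := ∏ j ∈ range M, (1 - x ^ ((j : ℤ) + 1))

def evenProd (M k : ℕ) : K := ∏ j ∈ range k, (1 - x ^ (2 * ((M : ℤ) - j)))

def binomProd (M k : ℕ) : K := evenProd x M k * ∏ j ∈ Ico k M, (1 - x ^ ((j : ℤ) + 1))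

def altTerm (a : ℤ) (k : ℕ) : K := (-1) ^ k * x ^ ((k.choose 2 : ℤ) + a * k)

def altSum (a : ℤ) (M : ℕ) : K := ∑ k ∈ range (M + 1), altTerm x a k * binomProd x M k

lemma evenProd_succ (M k : ℕ) :
    evenProd x M (k + 1) = evenProd x M k * (1 - x ^ (2 * ((M : ℤ) - k))) :=
  Finset.prod_range_succ _ k

lemma evenProd_succ_succ (M k : ℕ) :
    evenProd x (M + 1) (k + 1) = (1 - x ^ (2 * ((M : ℤ) + 1))) * evenProd x M k := by
  rw [evenProd, Finset.prod_range_succ', mul_comm, evenProd]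
  push_cast
  congr 1
  exact Finset.prod_congr rfl fun j _ => by ring_nf

lemma evenProd_eq_zero {M k : ℕ} (hk : M < k) : evenProd x M k = 0 :=
  Finset.prod_eq_zero (mem_range.mpr hk) (by simp)

lemma pochSelf_mul_prod_Ico {k M : ℕ} (hk : k ≤ M) :
    pochSelf x k * ∏ j ∈ Ico k M, (1 - x ^ ((j : ℤ) + 1)) = pochSelf x M :=
  Finset.prod_range_mul_prod_Ico _ hk

lemma pochSelf_succ (M : ℕ) : pochSelf x (M + 1) = pochSelf x M * (1 - x ^ ((M : ℤ) + 1)) :=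
  Finset.prod_range_succ (fun j : ℕ => (1 - x ^ ((j : ℤ) + 1))) M

lemma binomProd_zero (M : ℕ) : binomProd x M 0 = pochSelf x M := by
  rw [binomProd, evenProd, pochSelf, Finset.range_zero, Finset.prod_empty, one_mul,
    Finset.range_eq_Ico]

lemma binomProd_succ_self (M : ℕ) : binomProd x M (M + 1) = 0 := by
  simp [binomProd, evenProd, prod_range_succ]

lemma altTerm_zero (a : ℤ) : altTerm x a 0 = 1 := by simp [altTerm]

lemma altTerm_succ (a : ℤ) (k : ℕ) :
    altTerm x a (k + 1) = (-1) ^ (k + 1) * x ^ ((k.choose 2 : ℤ) + k + a * (k + 1)) := by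
  simp [altTerm, Nat.choose_succ_succ', add_comm]

lemma sum_altTerm_succ_mul_binomProd (a : ℤ) (M : ℕ) :
    ∑ i ∈ range (M + 1), altTerm x a (i + 1) * binomProd x M (i + 1)
      = altSum x a M - pochSelf x M := by
  have h := sum_range_succ' (fun k => altTerm x a k * binomProd x M k) (M + 1)
  rw [sum_range_succ, binomProd_succ_self, mul_zero, add_zero, altTerm_zero, binomProd_zero,
    one_mul] at h
  rw [altSum, h, add_sub_cancel_right]

variable {x}

lemma binomProd_succ_succ (hx : x ≠ 0) {M k : ℕ} (hk : k ≤ M) :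
    binomProd x (M + 1) (k + 1) = (1 - x ^ ((M : ℤ) + 1)) *
      (binomProd x M (k + 1)
        + x ^ (2 * ((M : ℤ) - k)) * (1 + x ^ ((k : ℤ) + 1)) * binomProd x M k) := by
  rcases hk.eq_or_lt with rfl | hlt
  · have h2k : x ^ (2 * ((k : ℤ) + 1)) = x ^ ((k : ℤ) + 1) * x ^ ((k : ℤ) + 1) := by
      rw [← zpow_add₀ hx]; ring_nf
    rw [binomProd_succ_self, binomProd, evenProd_succ_succ, binomProd, Finset.Ico_self,
      Finset.Ico_self, Finset.prod_empty, sub_self, mul_zero, zpow_zero, h2k]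
    ring
  set u := x ^ ((M : ℤ) - k)
  set a := x ^ ((k : ℤ) + 1)
  have hMa : x ^ ((M : ℤ) + 1) = u * a := by rw [← zpow_add₀ hx]; ring_nf
  have hu2 : x ^ (2 * ((M : ℤ) - k)) = u * u := by rw [← zpow_add₀ hx]; ring_nf
  have h2M : x ^ (2 * ((M : ℤ) + 1)) = (u * a) * (u * a) := by
    rw [← hMa, ← zpow_add₀ hx]; ring_nf
  have hT : ∏ j ∈ Ico (k + 1) (M + 1), (1 - x ^ ((j : ℤ) + 1))
      = (∏ j ∈ Ico (k + 1) M, (1 - x ^ ((j : ℤ) + 1))) * (1 - u * a) := by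
    rw [Finset.prod_Ico_succ_top hlt, hMa]
  have hT' : ∏ j ∈ Ico k M, (1 - x ^ ((j : ℤ) + 1))
      = (1 - a) * ∏ j ∈ Ico (k + 1) M, (1 - x ^ ((j : ℤ) + 1)) :=
    Finset.prod_eq_prod_Ico_succ_bot hlt _
  rw [binomProd, evenProd_succ_succ, hT, binomProd, evenProd_succ, binomProd, hT', h2M, hu2, hMa]
  ring

lemma binomProd_succ_mul (hx : x ≠ 0) {M k : ℕ} (hk : k ≤ M) :
    binomProd x M (k + 1) * (1 - x ^ (2 * ((k : ℤ) + 1)))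
      = (1 + x ^ ((k : ℤ) + 1)) * (1 - x ^ (2 * ((M : ℤ) - k))) * binomProd x M k := by
  rcases hk.eq_or_lt with rfl | hlt
  · rw [binomProd_succ_self, sub_self, mul_zero, zpow_zero]
    ring
  have h2k : x ^ (2 * ((k : ℤ) + 1)) = x ^ ((k : ℤ) + 1) * x ^ ((k : ℤ) + 1) := by
    rw [← zpow_add₀ hx]; ring_nf
  rw [binomProd, binomProd, evenProd_succ, Finset.prod_eq_prod_Ico_succ_bot hlt, h2k]
  ring

lemma binomProd_succ_succ' (hx : x ≠ 0) {M k : ℕ} (hk : k ≤ M) :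
    binomProd x (M + 1) (k + 1) = (1 - x ^ ((M : ℤ) + 1)) *
      (x ^ (2 * ((k : ℤ) + 1)) * binomProd x M (k + 1)
        + (1 + x ^ ((k : ℤ) + 1)) * binomProd x M k) := by
  linear_combination
    binomProd_succ_succ hx hk + (1 - x ^ ((M : ℤ) + 1)) * binomProd_succ_mul hx hk

lemma altSum_succ (hx : x ≠ 0) (a : ℤ) (M : ℕ) :
    altSum x a (M + 1) = (1 - x ^ ((M : ℤ) + 1)) *
      ((1 - x ^ (2 * (M : ℤ) + a + 1)) * altSum x a M
        - x ^ (2 * (M : ℤ) + a) * altSum x (a - 1) M) := by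
  have hterm : ∀ i ∈ range (M + 1), altTerm x a (i + 1) * binomProd x (M + 1) (i + 1)
      = (1 - x ^ ((M : ℤ) + 1)) * (altTerm x a (i + 1) * binomProd x M (i + 1)
        - x ^ (2 * (M : ℤ) + a) * (altTerm x (a - 1) i * binomProd x M i)
        - x ^ (2 * (M : ℤ) + a + 1) * (altTerm x a i * binomProd x M i)) := by
    intro i hi
    have e1 : x ^ ((i.choose 2 : ℤ) + i + a * (i + 1)) * x ^ (2 * ((M : ℤ) - i))
        = x ^ (2 * (M : ℤ) + a) * x ^ ((i.choose 2 : ℤ) + (a - 1) * i) := by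
      rw [← zpow_add₀ hx, ← zpow_add₀ hx]; ring_nf
    have e2 : x ^ ((i.choose 2 : ℤ) + i + a * (i + 1)) * x ^ (2 * ((M : ℤ) - i))
          * x ^ ((i : ℤ) + 1) = x ^ (2 * (M : ℤ) + a + 1) * x ^ ((i.choose 2 : ℤ) + a * i) := by
      rw [e1, mul_assoc, ← zpow_add₀ hx, ← zpow_add₀ hx, ← zpow_add₀ hx]
      ring_nf
    rw [binomProd_succ_succ hx (Nat.lt_succ_iff.mp (mem_range.mp hi)), altTerm_succ, altTerm,
      altTerm]
    linear_combination (-1) ^ (i + 1) * (1 - x ^ ((M : ℤ) + 1)) * binomProd x M i * (e1 + e2)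
  rw [altSum, Finset.sum_range_succ', Finset.sum_congr rfl hterm, ← Finset.mul_sum,
    Finset.sum_sub_distrib, Finset.sum_sub_distrib, ← Finset.mul_sum, ← Finset.mul_sum,
    sum_altTerm_succ_mul_binomProd, altTerm_zero, one_mul, binomProd_zero, pochSelf_succ]
  unfold altSum
  ring

lemma altSum_succ' (hx : x ≠ 0) (a : ℤ) (M : ℕ) :
    altSum x a (M + 1) = (1 - x ^ ((M : ℤ) + 1)) *
      ((1 - x ^ (a + 1)) * altSum x (a + 2) M - x ^ a * altSum x (a + 1) M) := by
  have hterm : ∀ i ∈ range (M + 1), altTerm x a (i + 1) * binomProd x (M + 1) (i + 1)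
      = (1 - x ^ ((M : ℤ) + 1)) * (altTerm x (a + 2) (i + 1) * binomProd x M (i + 1)
        - x ^ a * (altTerm x (a + 1) i * binomProd x M i)
        - x ^ (a + 1) * (altTerm x (a + 2) i * binomProd x M i)) := by
    intro i hi
    have e1 : x ^ ((i.choose 2 : ℤ) + i + a * (i + 1)) * x ^ (2 * ((i : ℤ) + 1))
        = x ^ ((i.choose 2 : ℤ) + i + (a + 2) * (i + 1)) := by
      rw [← zpow_add₀ hx]; ring_nf
    have e2 : x ^ ((i.choose 2 : ℤ) + i + a * (i + 1))
        = x ^ a * x ^ ((i.choose 2 : ℤ) + (a + 1) * i) := by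
      rw [← zpow_add₀ hx]; ring_nf
    have e3 : x ^ ((i.choose 2 : ℤ) + i + a * (i + 1)) * x ^ ((i : ℤ) + 1)
        = x ^ (a + 1) * x ^ ((i.choose 2 : ℤ) + (a + 2) * i) := by
      rw [← zpow_add₀ hx, ← zpow_add₀ hx]; ring_nf
    rw [binomProd_succ_succ' hx (Nat.lt_succ_iff.mp (mem_range.mp hi)), altTerm_succ,
      altTerm_succ, altTerm, altTerm]
    linear_combination (-1) ^ (i + 1) * (1 - x ^ ((M : ℤ) + 1)) *
      (binomProd x M (i + 1) * e1 + binomProd x M i * (e2 + e3))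
  rw [altSum, Finset.sum_range_succ', Finset.sum_congr rfl hterm, ← Finset.mul_sum,
    Finset.sum_sub_distrib, Finset.sum_sub_distrib, ← Finset.mul_sum, ← Finset.mul_sum,
    sum_altTerm_succ_mul_binomProd, altTerm_zero, one_mul, binomProd_zero, pochSelf_succ]
  unfold altSum
  ring

theorem altSum_zero_and_altSum_neg_one (hx : x ≠ 0) (M : ℕ) :
    altSum x 0 M = (-1) ^ M * x ^ ((M : ℤ) ^ 2) * pochSelf x M ∧
      altSum x (-1) M = (-1) ^ M * x ^ ((M : ℤ) ^ 2 - 2 * M) * pochSelf x M := by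
  induction M with
  | zero => simp [altSum, altTerm, binomProd_zero]
  | succ M ih =>
    obtain ⟨h0, h1⟩ := ih
    have e0 : x ^ (2 * (M : ℤ)) * x ^ ((M : ℤ) ^ 2 - 2 * M) = x ^ ((M : ℤ) ^ 2) := by
      rw [← zpow_add₀ hx]; ring_nf
    have e1 : x ^ (2 * (M : ℤ) + 1) * x ^ ((M : ℤ) ^ 2) = x ^ (((M + 1 : ℕ) : ℤ) ^ 2) := by
      rw [← zpow_add₀ hx]; push_cast; ring_nf
    have e2 : x ^ (-1 : ℤ) * x ^ ((M : ℤ) ^ 2)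
        = x ^ (((M + 1 : ℕ) : ℤ) ^ 2 - 2 * ((M + 1 : ℕ) : ℤ)) := by
      rw [← zpow_add₀ hx]; push_cast; ring_nf
    constructor
    · rw [altSum_succ hx, zero_sub, h0, h1, pochSelf_succ, add_zero]
      linear_combination -(-1) ^ M * (1 - x ^ ((M : ℤ) + 1)) * pochSelf x M * (e0 + e1)
    · rw [altSum_succ' hx, neg_add_cancel, zpow_zero, sub_self, zero_mul, zero_sub, h0,
        pochSelf_succ]
      linear_combination -(-1) ^ M * (1 - x ^ ((M : ℤ) + 1)) * pochSelf x M * e2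

theorem sum_evenProd_div_pochSelf (hx : x ≠ 0) {M N : ℕ} (hMN : M ≤ N)
    (hM : pochSelf x M ≠ 0) :
    ∑ k ∈ range (N + 1), (-1) ^ k * x ^ (k.choose 2 : ℤ) * evenProd x M k / pochSelf x k
      = (-1) ^ M * x ^ ((M : ℤ) ^ 2) := by
  have hvanish : ∀ k ∈ range (N + 1), k ∉ range (M + 1) →
      (-1) ^ k * x ^ (k.choose 2 : ℤ) * evenProd x M k / pochSelf x k = 0 := fun k _ hk => by
    rw [evenProd_eq_zero x (by simpa using hk), mul_zero, zero_div]
  have hterm : ∀ k ∈ range (M + 1),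
      (-1) ^ k * x ^ (k.choose 2 : ℤ) * evenProd x M k / pochSelf x k
        = altTerm x 0 k * binomProd x M k / pochSelf x M := fun k hk => by
    have hk : k ≤ M := Nat.lt_succ_iff.mp (mem_range.mp hk)
    have hpk : pochSelf x k ≠ 0 := left_ne_zero_of_mul (pochSelf_mul_prod_Ico x hk ▸ hM)
    rw [div_eq_div_iff hpk hM, altTerm, zero_mul, add_zero, binomProd,
      ← pochSelf_mul_prod_Ico x hk]
    ring
  rw [← Finset.sum_subset (range_subset_range.mpr (by omega)) hvanish,
    Finset.sum_congr rfl hterm, ← Finset.sum_div, ← altSum,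
    (altSum_zero_and_altSum_neg_one hx M).1, mul_div_cancel_right₀ _ hM]

end AlternatingSum

section Evaluation

variable {K : Type*} [Field K] [CharZero K]

def HasValueAt (ζ : K) (A : RatFunc ℚ) (z : K) : Prop :=
  ∃ u v : ℚ[X], aeval ζ v ≠ 0 ∧
    A * algebraMap ℚ[X] (RatFunc ℚ) v = algebraMap ℚ[X] (RatFunc ℚ) u ∧ aeval ζ u = z * aeval ζ v

namespace HasValueAt

variable {ζ : K} {A B : RatFunc ℚ} {z w : K}

lemma algebraMap (ζ : K) (p : ℚ[X]) :
    HasValueAt ζ (algebraMap ℚ[X] (RatFunc ℚ) p) (aeval ζ p) :=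
  ⟨p, 1, by simp, by simp, by simp⟩

lemma X (ζ : K) : HasValueAt ζ RatFunc.X ζ := by
  simpa using HasValueAt.algebraMap ζ Polynomial.X

lemma one (ζ : K) : HasValueAt ζ 1 1 := by
  simpa using HasValueAt.algebraMap ζ 1

lemma neg (hA : HasValueAt ζ A z) : HasValueAt ζ (-A) (-z) := by
  obtain ⟨u, v, hv, hAv, hu⟩ := hA
  exact ⟨-u, v, hv, by rw [neg_mul, hAv, map_neg], by rw [map_neg, hu, neg_mul]⟩

lemma add (hA : HasValueAt ζ A z) (hB : HasValueAt ζ B w) : HasValueAt ζ (A + B) (z + w) := by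
  obtain ⟨u₁, v₁, hv₁, hA, hu₁⟩ := hA
  obtain ⟨u₂, v₂, hv₂, hB, hu₂⟩ := hB
  refine ⟨u₁ * v₂ + u₂ * v₁, v₁ * v₂, by simpa using mul_ne_zero hv₁ hv₂, ?_, ?_⟩
  · simp only [map_add, map_mul, ← hA, ← hB]
    ring
  · simp only [map_add, map_mul, hu₁, hu₂]
    ring

lemma mul (hA : HasValueAt ζ A z) (hB : HasValueAt ζ B w) : HasValueAt ζ (A * B) (z * w) := by
  obtain ⟨u₁, v₁, hv₁, hA, hu₁⟩ := hA
  obtain ⟨u₂, v₂, hv₂, hB, hu₂⟩ := hB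
  refine ⟨u₁ * u₂, v₁ * v₂, by simpa using mul_ne_zero hv₁ hv₂, ?_, ?_⟩
  · simp only [map_mul, ← hA, ← hB]
    ring
  · simp only [map_mul, hu₁, hu₂]
    ring

lemma inv (hA : HasValueAt ζ A z) (hz : z ≠ 0) : HasValueAt ζ A⁻¹ z⁻¹ := by
  obtain ⟨u, v, hv, hAv, hu⟩ := hA
  have hu0 : aeval ζ u ≠ 0 := by rw [hu]; exact mul_ne_zero hz hv
  have hA0 : A ≠ 0 := by
    rintro rfl
    refine RatFunc.algebraMap_ne_zero (fun hu' => hu0 ?_) (hAv.symm.trans (zero_mul _))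
    rw [hu', map_zero]
  refine ⟨v, u, hu0, ?_, ?_⟩
  · rw [← hAv, inv_mul_cancel_left₀ hA0]
  · rw [hu, inv_mul_cancel_left₀ hz]

lemma sub (hA : HasValueAt ζ A z) (hB : HasValueAt ζ B w) : HasValueAt ζ (A - B) (z - w) := by
  simpa only [sub_eq_add_neg] using hA.add hB.neg

lemma div (hA : HasValueAt ζ A z) (hB : HasValueAt ζ B w) (hw : w ≠ 0) :
    HasValueAt ζ (A / B) (z / w) := by
  simpa only [div_eq_mul_inv] using hA.mul (hB.inv hw)

lemma pow (hA : HasValueAt ζ A z) (k : ℕ) : HasValueAt ζ (A ^ k) (z ^ k) := by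
  induction k with
  | zero => simpa using one ζ
  | succ k ih => simpa only [pow_succ] using ih.mul hA

lemma zpow (hA : HasValueAt ζ A z) (hz : z ≠ 0) (k : ℤ) : HasValueAt ζ (A ^ k) (z ^ k) := by
  cases k with
  | ofNat k => simpa using hA.pow k
  | negSucc k => simpa using (hA.pow (k + 1)).inv (pow_ne_zero _ hz)

lemma sum {ι : Type*} (s : Finset ι) {A : ι → RatFunc ℚ} {z : ι → K}
    (h : ∀ i ∈ s, HasValueAt ζ (A i) (z i)) : HasValueAt ζ (∑ i ∈ s, A i) (∑ i ∈ s, z i) := by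
  classical
  induction s using Finset.induction_on with
  | empty => simpa using HasValueAt.algebraMap ζ 0
  | insert i s hi ih =>
    rw [sum_insert hi, sum_insert hi]
    exact (h i (mem_insert_self i s)).add (ih fun j hj => h j (mem_insert_of_mem hj))

lemma prod {ι : Type*} (s : Finset ι) {A : ι → RatFunc ℚ} {z : ι → K}
    (h : ∀ i ∈ s, HasValueAt ζ (A i) (z i)) : HasValueAt ζ (∏ i ∈ s, A i) (∏ i ∈ s, z i) := by
  classical
  induction s using Finset.induction_on with
  | empty => simpa using one ζ
  | insert i s hi ih =>
    rw [prod_insert hi, prod_insert hi]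
    exact (h i (mem_insert_self i s)).mul (ih fun j hj => h j (mem_insert_of_mem hj))

end HasValueAt

theorem congrModCyclo_of_hasValueAt {n : ℕ} (hn : 0 < n) {ζ : K}
    (hζ : IsPrimitiveRoot ζ n) {A B : RatFunc ℚ} {z : K} (hA : HasValueAt ζ A z)
    (hB : HasValueAt ζ B z) : CongrModCyclo n 1 A B := by
  obtain ⟨u₁, v₁, hv₁, hA, hu₁⟩ := hA
  obtain ⟨u₂, v₂, hv₂, hB, hu₂⟩ := hB
  have hmin : cyclotomic n ℚ = minpoly ℚ ζ := cyclotomic_eq_minpoly_rat hζ hn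
  obtain ⟨c, hc⟩ : cyclotomic n ℚ ∣ u₁ * v₂ - u₂ * v₁ := by
    rw [hmin]
    apply minpoly.dvd
    simp only [map_sub, map_mul, hu₁, hu₂]
    ring
  refine ⟨c, v₁ * v₂, ?_, ?_⟩
  · rintro ⟨d, hd⟩
    apply mul_ne_zero hv₁ hv₂
    rw [← map_mul, hd, map_mul, hmin, minpoly.aeval, zero_mul]
  · rw [pow_one, ← hc, map_sub, map_mul, map_mul, map_mul, ← hA, ← hB]
    ring

lemma hasValueAt_qPoch (ζ : K) (a b k : ℕ) :
    HasValueAt ζ (qPoch (q ^ a) (q ^ b) k) (∏ j ∈ range k, (1 - ζ ^ a * (ζ ^ b) ^ j)) :=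
  HasValueAt.prod _ fun _ _ =>
    (HasValueAt.one ζ).sub (((HasValueAt.X ζ).pow a).mul (((HasValueAt.X ζ).pow b).pow _))

end Evaluation

section PrimitiveRoot

variable {K : Type*} [Field K] {ζ : K} {n : ℕ}

lemma IsPrimitiveRoot.zpow_eq_zpow_of_dvd_sub (hζ : IsPrimitiveRoot ζ n) {a b : ℤ}
    (h : (n : ℤ) ∣ a - b) : ζ ^ a = ζ ^ b := by
  rcases eq_or_ne n 0 with rfl | hn
  · rw [show a = b by simpa [sub_eq_zero] using h]
  · rw [← sub_add_cancel a b, zpow_add₀ (hζ.ne_zero hn), (hζ.zpow_eq_one_iff_dvd _).mpr h,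
      one_mul]

lemma two_mul_choose_two (k : ℕ) : 2 * (k.choose 2 : ℤ) = k ^ 2 - k := by
  qify
  rw [Nat.cast_choose_two]
  ring

lemma prod_one_sub_mul_pow_eq_pochSelf (x : K) (k : ℕ) :
    ∏ j ∈ range k, (1 - x * x ^ j) = pochSelf x k :=
  Finset.prod_congr rfl fun j _ => by rw [← pow_succ', ← zpow_natCast, Nat.cast_succ]

lemma pochSelf_ne_zero (hζ : IsPrimitiveRoot ζ n) {k : ℕ} (hk : k < n) : pochSelf ζ k ≠ 0 := by
  refine Finset.prod_ne_zero_iff.mpr fun j hj => sub_ne_zero.mpr fun h => ?_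
  rw [← Nat.cast_succ, zpow_natCast] at h
  exact hζ.pow_ne_one_of_pos_of_lt j.succ_ne_zero (by simp at hj; omega) h.symm

lemma prod_one_sub_pow_eq_evenProd (hζ : IsPrimitiveRoot ζ n) {m M : ℕ} (hm : 1 ≤ m)
    (hmM : 2 * M + 2 * m = n + 1) (k : ℕ) :
    ∏ j ∈ range k, (1 - ζ ^ (4 * m - 2) * (ζ ^ 4) ^ j)
      = (-1) ^ k * ζ ^ (4 * (k.choose 2 : ℤ) - 4 * M * k) * evenProd (ζ ^ 2) M k := by
  induction k with
  | zero => simp [evenProd]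
  | succ k ih =>
    have hζ0 : ζ ≠ 0 := hζ.ne_zero (by omega)
    have hfac : ζ ^ (4 * m - 2) * (ζ ^ 4) ^ k = ζ ^ (4 * (k : ℤ) - 4 * M) := by
      rw [← pow_mul, ← pow_add, ← zpow_natCast]
      exact hζ.zpow_eq_zpow_of_dvd_sub ⟨2, by push_cast [show 2 ≤ 4 * m by omega]; linarith⟩
    have hinv : ζ ^ (4 * (k : ℤ) - 4 * M) * (ζ ^ 2) ^ (2 * ((M : ℤ) - k)) = 1 := by
      rw [← zpow_natCast, ← zpow_mul, ← zpow_add₀ hζ0]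
      ring_nf
      exact zpow_zero ζ
    have hexp : ζ ^ (4 * (((k + 1).choose 2 : ℕ) : ℤ) - 4 * M * ((k + 1 : ℕ) : ℤ))
        = ζ ^ (4 * (k.choose 2 : ℤ) - 4 * M * k) * ζ ^ (4 * (k : ℤ) - 4 * M) := by
      rw [← zpow_add₀ hζ0, Nat.choose_succ_succ', Nat.choose_one_right]
      push_cast
      ring_nf
    rw [Finset.prod_range_succ, ih, evenProd_succ, hfac, hexp]
    linear_combination
      -(-1) ^ k * ζ ^ (4 * (k.choose 2 : ℤ) - 4 * M * k) * evenProd (ζ ^ 2) M k * hinv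

lemma summand_eq_div_pochSelf (hζ : IsPrimitiveRoot ζ n) {m M : ℕ} (hm : 1 ≤ m)
    (hmM : 2 * M + 2 * m = n + 1) (k : ℕ) :
    (∏ j ∈ range k, (1 - ζ ^ (4 * m - 2) * (ζ ^ 4) ^ j))
        / (∏ j ∈ range k, (1 - ζ ^ 2 * (ζ ^ 2) ^ j))
        * ζ ^ (3 * (k : ℤ) - (k : ℤ) ^ 2 - 4 * (k : ℤ) * (m : ℤ))
      = (-1) ^ k * (ζ ^ 2) ^ (k.choose 2 : ℤ) * evenProd (ζ ^ 2) M k / pochSelf (ζ ^ 2) k := by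
  have hpow : ζ ^ (4 * (k.choose 2 : ℤ) - 4 * M * k)
      * ζ ^ (3 * (k : ℤ) - (k : ℤ) ^ 2 - 4 * k * m) = (ζ ^ 2) ^ (k.choose 2 : ℤ) := by
    rw [← zpow_add₀ (hζ.ne_zero (by omega)), ← zpow_natCast, ← zpow_mul]
    refine hζ.zpow_eq_zpow_of_dvd_sub ⟨-2 * k, ?_⟩
    have hmM' : (2 * M + 2 * m : ℤ) = n + 1 := by exact_mod_cast hmM
    linear_combination two_mul_choose_two k - 2 * (k : ℤ) * hmM'
  rw [prod_one_sub_pow_eq_evenProd hζ hm hmM, prod_one_sub_mul_pow_eq_pochSelf, ← hpow]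
  ring

theorem sum_summands_eq_of_isPrimitiveRoot (hζ : IsPrimitiveRoot ζ n) (hn : Odd n) {m : ℕ}
    (hm1 : 1 ≤ m) (hm2 : m ≤ (n + 1) / 2) :
    ∑ k ∈ range (n - m + 1),
        (∏ j ∈ range k, (1 - ζ ^ (4 * m - 2) * (ζ ^ 4) ^ j))
          / (∏ j ∈ range k, (1 - ζ ^ 2 * (ζ ^ 2) ^ j))
          * ζ ^ (3 * (k : ℤ) - (k : ℤ) ^ 2 - 4 * (k : ℤ) * (m : ℤ))
      = (-1) ^ ((n - 1) / 2 + m - 1)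
          * ζ ^ (-(((n : ℤ) ^ 2 - 1) / 2) + 2 * (m : ℤ) ^ 2 - 2 * (m : ℤ)) := by
  obtain ⟨M, hmM⟩ : ∃ M, 2 * M + 2 * m = n + 1 := ⟨(n + 1) / 2 - m, by grind⟩
  have hx : IsPrimitiveRoot (ζ ^ 2) n := hζ.pow_of_coprime 2 (Nat.coprime_two_left.mpr hn)
  rw [Finset.sum_congr rfl fun k _ => summand_eq_div_pochSelf hζ hm1 hmM k,
    sum_evenProd_div_pochSelf (hx.ne_zero (by omega)) (by omega) (pochSelf_ne_zero hx (by omega)),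
    show (n - 1) / 2 + m - 1 = M + 2 * (m - 1) by omega, pow_add, pow_mul, neg_one_sq, one_pow,
    mul_one, ← zpow_natCast ζ 2, ← zpow_mul]
  congr 1
  refine hζ.zpow_eq_zpow_of_dvd_sub ⟨2 * M, ?_⟩
  have hn' : (n : ℤ) = 2 * M + 2 * m - 1 := by omega
  have hdiv : ((n : ℤ) ^ 2 - 1) / 2 = 2 * (M + m) ^ 2 - 2 * (M + m) := by
    rw [hn', show (2 * M + 2 * m - 1 : ℤ) ^ 2 - 1 = 2 * (2 * (M + m) ^ 2 - 2 * (M + m)) by ring,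
      Int.mul_ediv_cancel_left _ two_ne_zero]
  rw [hdiv, hn']
  ring

end PrimitiveRoot

theorem qcongruence_thm_general (n m : ℕ) (hn : Odd n)
    (hm1 : 1 ≤ m) (hm2 : m ≤ (n + 1) / 2) :
    CongrModCyclo n 1
      (∑ k ∈ range (n - m + 1),
        qPoch (q ^ (4 * m - 2)) (q ^ 4) k / qPoch (q ^ 2) (q ^ 2) k
          * q ^ (3 * (k : ℤ) - (k : ℤ) ^ 2 - 4 * (k : ℤ) * (m : ℤ)))
      ((-1) ^ ((n - 1) / 2 + m - 1)
        * q ^ (-(((n : ℤ) ^ 2 - 1) / 2) + 2 * (m : ℤ) ^ 2 - 2 * (m : ℤ))) := by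
  obtain ⟨ζ, hζ⟩ : ∃ ζ : ℂ, IsPrimitiveRoot ζ n := ⟨_, Complex.isPrimitiveRoot_exp n hn.pos.ne'⟩
  have hζ0 : ζ ≠ 0 := hζ.ne_zero hn.pos.ne'
  refine congrModCyclo_of_hasValueAt hn.pos hζ ?_
    (((HasValueAt.one ζ).neg.pow _).mul ((HasValueAt.X ζ).zpow hζ0 _))
  rw [← sum_summands_eq_of_isPrimitiveRoot hζ hn hm1 hm2]
  refine HasValueAt.sum _ fun k hk =>
    ((hasValueAt_qPoch ζ _ _ k).div (hasValueAt_qPoch ζ _ _ k) ?_).mul ((HasValueAt.X ζ).zpow hζ0 _)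
  rw [prod_one_sub_mul_pow_eq_pochSelf]
  exact pochSelf_ne_zero (hζ.pow_of_coprime 2 (Nat.coprime_two_left.mpr hn))
    (by simp only [mem_range] at hk; omega)

theorem qcongruence_thm (n m : ℕ) (hn : Odd n) (hn0 : 0 < n)
    (hm1 : 1 ≤ m) (hm2 : m ≤ (n + 1) / 2) :
    CongrModCyclo n 1
      (∑ k ∈ range (n - m + 1),
        qPoch (q ^ (4 * m - 2)) (q ^ 4) k / qPoch (q ^ 2) (q ^ 2) k
          * q ^ (3 * (k : ℤ) - (k : ℤ) ^ 2 - 4 * (k : ℤ) * (m : ℤ)))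
      ((-1) ^ ((n - 1) / 2 + m - 1)
        * q ^ (-(((n : ℤ) ^ 2 - 1) / 2) + 2 * (m : ℤ) ^ 2 - 2 * (m : ℤ))) :=
  qcongruence_thm_general n m hn hm1 hm2
end

section
/- For every positive odd integer n, (q^{2d+1};q^2)_n / (q;q)_{n-1} ≡ 1 - q^n (mod Phi_n(q)^2) for every integer d with -(n-1)/2 < d < (n-1)/2. -/
open Finset Polynomial

/-! The exponents `2d + 1 + 2j` (`0 ≤ j < n`) of the numerator form a full residue system modulo
the odd number `n`, and exactly one of them equals `n`. Splitting off that factor writes the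
numerator as `(1 - q^n) P`, where the exponents of `P` run over the nonzero residues mod `n`, so
`P` and `(q;q)_{n-1}` agree at a primitive `n`-th root of unity, i.e. modulo `Φ_n(q)` (after
clearing negative powers of `q`). Then the difference to be shown divisible by `Φ_n(q)^2` is
`(1 - q^n) (P - (q;q)_{n-1}) / (q;q)_{n-1}`, whose two numerator factors each vanish at that
root. -/

lemma congrModCyclo_of_sub_eq_div {n e : ℕ} {A B : RatFunc ℚ} {f g : ℚ[X]}
    (hf : cyclotomic n ℚ ^ e ∣ f) (hg : ¬ cyclotomic n ℚ ∣ g)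
    (h : A - B = algebraMap ℚ[X] (RatFunc ℚ) f / algebraMap ℚ[X] (RatFunc ℚ) g) :
    CongrModCyclo n e A B := by
  obtain ⟨u, rfl⟩ := hf
  have hg0 : algebraMap ℚ[X] (RatFunc ℚ) g ≠ 0 := by
    rw [map_ne_zero_iff _ (RatFunc.algebraMap_injective ℚ)]
    rintro rfl
    exact hg (dvd_zero _)
  exact ⟨u, g, hg, by rw [h, div_mul_cancel₀ _ hg0]⟩

lemma cyclotomic_rat_dvd_iff_aeval_eq_zero {K : Type*} [Field K] [CharZero K] {n : ℕ} {μ : K}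
    (hμ : IsPrimitiveRoot μ n) (hn : 0 < n) {p : ℚ[X]} :
    cyclotomic n ℚ ∣ p ↔ aeval μ p = 0 := by
  rw [cyclotomic_eq_minpoly_rat hμ hn]
  exact minpoly.dvd_iff

namespace IsPrimitiveRoot

variable {R : Type*} [CommRing R] [IsDomain R] {ζ : R} {n : ℕ}

theorem X_pow_sub_one_eq_prod_pow_add_mul (hζ : IsPrimitiveRoot ζ n) (hn : 0 < n) (a : ℕ)
    {b : ℕ} (hb : b.Coprime n) :
    X ^ n - 1 = ∏ j ∈ range n, (X - C (ζ ^ (a + b * j))) := by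
  have hα : (ζ ^ a) ^ n = 1 := by rw [← pow_mul, mul_comm, pow_mul, hζ.pow_eq_one, one_pow]
  rw [← C_1, X_pow_sub_C_eq_prod (hζ.pow_of_coprime b hb) hn hα]
  refine prod_congr rfl fun j _ => ?_
  rw [← pow_mul, ← pow_add, add_comm]

theorem prod_erase_one_sub_pow_add_mul (hζ : IsPrimitiveRoot ζ n) (hn : 0 < n) (a : ℕ)
    {b : ℕ} (hb : b.Coprime n) {j₀ : ℕ} (hj₀ : j₀ < n) (hdvd : n ∣ a + b * j₀) :
    ∏ j ∈ (range n).erase j₀, (1 - ζ ^ (a + b * j)) =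
      ∏ k ∈ range (n - 1), (1 - ζ ^ (k + 1)) := by
  -- both sides are `(X ^ n - 1) / (X - 1)` evaluated at `1`
  have hroots := (hζ.X_pow_sub_one_eq_prod_pow_add_mul hn a hb).symm.trans
    (hζ.X_pow_sub_one_eq_prod_pow_add_mul hn 0 (Nat.coprime_one_left n))
  obtain ⟨k, rfl⟩ : ∃ k, n = k + 1 := ⟨n - 1, by omega⟩
  rw [← mul_prod_erase _ _ (mem_range.2 hj₀), (hζ.pow_eq_one_iff_dvd _).2 hdvd,
    prod_range_succ', mul_comm] at hroots
  simp only [zero_add, one_mul, mul_zero, pow_zero] at hroots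
  have := congrArg (eval 1) (mul_right_cancel₀ (X_sub_C_ne_zero 1) hroots)
  simpa only [eval_prod, eval_sub, eval_X, eval_C, Nat.add_sub_cancel] using this

end IsPrimitiveRoot

lemma pow_mul_prod_one_sub_zpow {K ι : Type*} [Field K] {x : K} (hx : x ≠ 0) (N : ℕ)
    (s : Finset ι) (c : ι → ℤ) (e : ι → ℕ) (he : ∀ i ∈ s, (e i : ℤ) = N + c i) :
    x ^ (N * #s) * ∏ i ∈ s, (1 - x ^ c i) = ∏ i ∈ s, (x ^ N - x ^ e i) := by
  rw [pow_mul, ← prod_const, ← prod_mul_distrib]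
  refine prod_congr rfl fun i hi => ?_
  rw [mul_sub, mul_one, ← zpow_natCast x (e i), he i hi, zpow_add₀ hx, zpow_natCast]

lemma q_ne_zero : q ≠ 0 := RatFunc.X_ne_zero

lemma algebraMap_X_eq_q : algebraMap ℚ[X] (RatFunc ℚ) X = q := RatFunc.algebraMap_X

lemma pow_mul_qPoch_zpow_sq {n a : ℕ} {d : ℤ} (ha : (a : ℤ) = n + (2 * d + 1)) :
    q ^ (n * n) * qPoch (q ^ (2 * d + 1)) (q ^ 2) n =
      ∏ j ∈ range n, (q ^ n - q ^ (a + 2 * j)) := by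
  have h := pow_mul_prod_one_sub_zpow q_ne_zero n (range n) (fun j => 2 * d + 1 + 2 * j)
    (fun j => a + 2 * j) (fun j _ => by push_cast; omega)
  rw [card_range] at h
  rw [qPoch, ← h]
  congr 1
  refine prod_congr rfl fun j _ => ?_
  rw [← pow_mul, ← zpow_natCast, ← zpow_add₀ q_ne_zero]
  push_cast
  rfl

lemma pow_mul_qPoch_self (n k : ℕ) :
    q ^ (n * k) * qPoch q q k = ∏ j ∈ range k, (q ^ n - q ^ (n + (j + 1))) := by
  have h := pow_mul_prod_one_sub_zpow q_ne_zero n (range k) (fun j => (j + 1 : ℕ))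
    (fun j => n + (j + 1)) (fun j _ => by push_cast; ring)
  rw [card_range] at h
  rw [qPoch, ← h]
  congr 1
  refine prod_congr rfl fun j _ => ?_
  rw [zpow_natCast, pow_succ']

/-- `q ^ (n * (n - 1))` times `(q^(2d+1); q^2)_n / (1 - q^n)`, where `a = n + 2d + 1` and `j₀` is
the index of the factor `1 - q^n`. -/
noncomputable def numPoly (n a j₀ : ℕ) : ℚ[X] :=
  ∏ j ∈ (range n).erase j₀, (X ^ n - X ^ (a + 2 * j))

/-- `q ^ (n * (n - 1))` times `(q; q)_{n-1}`. -/
noncomputable def denPoly (n : ℕ) : ℚ[X] :=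
  ∏ k ∈ range (n - 1), (X ^ n - X ^ (n + (k + 1)))

lemma qPoch_div_qPoch_sub_one_sub_pow {n a j₀ : ℕ} {d : ℤ} (ha : (a : ℤ) = n + (2 * d + 1))
    (hj₀ : j₀ < n) (haj : a + 2 * j₀ = 2 * n) (hden : denPoly n ≠ 0) :
    qPoch (q ^ (2 * d + 1)) (q ^ 2) n / qPoch q q (n - 1) - (1 - q ^ n)
      = algebraMap ℚ[X] (RatFunc ℚ) ((1 - X ^ n) * (numPoly n a j₀ - denPoly n))
        / algebraMap ℚ[X] (RatFunc ℚ) (denPoly n) := by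
  have hq := q_ne_zero
  have hden₀ : algebraMap ℚ[X] (RatFunc ℚ) (denPoly n) ≠ 0 :=
    (map_ne_zero_iff _ (RatFunc.algebraMap_injective ℚ)).2 hden
  have hnum_eq : q ^ (n * n) * qPoch (q ^ (2 * d + 1)) (q ^ 2) n
      = q ^ n * (1 - q ^ n) * algebraMap ℚ[X] (RatFunc ℚ) (numPoly n a j₀) := by
    rw [pow_mul_qPoch_zpow_sq ha, ← mul_prod_erase _ _ (mem_range.2 hj₀),
      show a + 2 * j₀ = n + n by omega]
    simp only [numPoly, map_prod, map_sub, map_pow, algebraMap_X_eq_q]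
    ring
  have hden_eq :
      q ^ (n * (n - 1)) * qPoch q q (n - 1) = algebraMap ℚ[X] (RatFunc ℚ) (denPoly n) := by
    simp only [pow_mul_qPoch_self, denPoly, map_prod, map_sub, map_pow, algebraMap_X_eq_q]
  have hexp : n * n = n + n * (n - 1) := by
    rw [Nat.mul_sub_one]
    have := Nat.le_mul_self n
    omega
  rw [eq_div_of_mul_eq (pow_ne_zero _ hq) ((mul_comm _ _).trans hnum_eq),
    eq_div_of_mul_eq (pow_ne_zero _ hq) ((mul_comm _ _).trans hden_eq), hexp]
  simp only [map_mul, map_sub, map_one, map_pow, algebraMap_X_eq_q]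
  field_simp
  ring

section PrimitiveRoot

variable {R : Type*} [CommRing R] [IsDomain R] [Algebra ℚ R] {ζ : R} {n : ℕ}

lemma aeval_numPoly_eq_aeval_denPoly (hζ : IsPrimitiveRoot ζ n) (hn : Odd n) {a j₀ : ℕ}
    (hj₀ : j₀ < n) (haj : a + 2 * j₀ = 2 * n) :
    aeval ζ (numPoly n a j₀) = aeval ζ (denPoly n) := by
  simp only [numPoly, denPoly, map_prod, map_sub, map_pow, aeval_X, hζ.pow_eq_one, pow_add ζ n,
    one_mul]
  exact hζ.prod_erase_one_sub_pow_add_mul hn.pos a (Nat.coprime_two_left.2 hn) hj₀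
    ⟨2, by omega⟩

lemma aeval_denPoly_ne_zero (hζ : IsPrimitiveRoot ζ n) : aeval ζ (denPoly n) ≠ 0 := by
  simp only [denPoly, map_prod, map_sub, map_pow, aeval_X, hζ.pow_eq_one, pow_add ζ n, one_mul]
  exact prod_ne_zero_iff.2 fun k hk =>
    sub_ne_zero.2 (hζ.pow_ne_one_of_pos_of_lt k.succ_ne_zero (by grind)).symm

end PrimitiveRoot

theorem lemma_congruence_general (n : ℕ) (hn : Odd n) (d : ℤ)
    (hd1 : -(((n : ℤ) - 1) / 2) < d) (hd2 : d < ((n : ℤ) - 1) / 2) :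
    CongrModCyclo n 2
      (qPoch (q ^ (2 * d + 1)) (q ^ 2) n / qPoch q q (n - 1))
      (1 - q ^ n) := by
  obtain ⟨m, hm⟩ := hn
  obtain ⟨a, ha⟩ : ∃ a : ℕ, (a : ℤ) = n + (2 * d + 1) :=
    ⟨_, Int.toNat_of_nonneg (by omega)⟩
  obtain ⟨j₀, hj₀⟩ : ∃ j₀ : ℕ, (j₀ : ℤ) = m - d :=
    ⟨_, Int.toNat_of_nonneg (by omega)⟩
  have hj₀n : j₀ < n := by omega
  have haj : a + 2 * j₀ = 2 * n := by omega
  have hζ : IsPrimitiveRoot (Complex.exp (2 * Real.pi * Complex.I / n)) n :=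
    Complex.isPrimitiveRoot_exp n (by omega)
  have hdvd_iff := fun p => cyclotomic_rat_dvd_iff_aeval_eq_zero (p := p) hζ (by omega)
  have hden := aeval_denPoly_ne_zero hζ
  refine congrModCyclo_of_sub_eq_div ?_ (mt (hdvd_iff _).1 hden)
    (qPoch_div_qPoch_sub_one_sub_pow ha hj₀n haj fun h => hden (by rw [h, map_zero]))
  rw [sq]
  refine mul_dvd_mul (dvd_sub_comm.1 (cyclotomic.dvd_X_pow_sub_one n ℚ)) ((hdvd_iff _).2 ?_)
  rw [map_sub, aeval_numPoly_eq_aeval_denPoly hζ ⟨m, hm⟩ hj₀n haj, sub_self]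

theorem lemma_congruence (n : ℕ) (hn : Odd n) (hn0 : 0 < n) (d : ℤ)
    (hd1 : -(((n : ℤ) - 1) / 2) < d) (hd2 : d < ((n : ℤ) - 1) / 2) :
    CongrModCyclo n 2
      (qPoch (q ^ (2 * d + 1)) (q ^ 2) n / qPoch q q (n - 1))
      (1 - q ^ n) :=
  lemma_congruence_general n hn d hd1 hd2
end
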